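/- Let a ∈ Cℓ(1,2) be nonzero with P(a) = 0 and K = a₀² + a₂² + a₄² + a₆². Then x = a'/(4K) satisfies the Moore–Penrose equations: axa = a, xax = x, (ax)' = ax, and (xa)' = xa. -/
import Mathlib


/-- The Clifford algebra `Cℓ(1,2)` as an 8-dimensional real vector space with
coordinates in the basis `e₀ = 1, e₁ = i₁, e₂ = i₂, e₃ = i₁i₂, e₄ = i₃,
e₅ = i₁i₃, e₆ = i₂i₃, e₇ = i₁i₂i₃`, where `i₁² = 1`, `i₂² = i₃² = -1` and the
generators anticommute. -/
@[ext] structure Cl12 where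
  x0 : ℝ
  x1 : ℝ
  x2 : ℝ
  x3 : ℝ
  x4 : ℝ
  x5 : ℝ
  x6 : ℝ
  x7 : ℝ

namespace Cl12

instance : Zero Cl12 := ⟨⟨0,0,0,0,0,0,0,0⟩⟩
instance : One Cl12 := ⟨⟨1,0,0,0,0,0,0,0⟩⟩
instance : Add Cl12 :=
  ⟨fun a b => ⟨a.x0+b.x0, a.x1+b.x1, a.x2+b.x2, a.x3+b.x3,
               a.x4+b.x4, a.x5+b.x5, a.x6+b.x6, a.x7+b.x7⟩⟩
instance : Neg Cl12 := ⟨fun a => ⟨-a.x0,-a.x1,-a.x2,-a.x3,-a.x4,-a.x5,-a.x6,-a.x7⟩⟩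
instance : Sub Cl12 := ⟨fun a b => a + -b⟩
instance : SMul ℝ Cl12 :=
  ⟨fun r a => ⟨r*a.x0, r*a.x1, r*a.x2, r*a.x3, r*a.x4, r*a.x5, r*a.x6, r*a.x7⟩⟩

/-- Multiplication in `Cℓ(1,2)`, from the multiplication table of the basis. -/
instance : Mul Cl12 := ⟨fun a b =>
  ⟨a.x0*b.x0 + a.x1*b.x1 - a.x2*b.x2 + a.x3*b.x3 - a.x4*b.x4 + a.x5*b.x5 - a.x6*b.x6 - a.x7*b.x7,
   a.x0*b.x1 + a.x1*b.x0 + a.x2*b.x3 - a.x3*b.x2 + a.x4*b.x5 - a.x5*b.x4 - a.x6*b.x7 - a.x7*b.x6,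
   a.x0*b.x2 + a.x1*b.x3 + a.x2*b.x0 - a.x3*b.x1 + a.x4*b.x6 - a.x5*b.x7 - a.x6*b.x4 - a.x7*b.x5,
   a.x0*b.x3 + a.x1*b.x2 - a.x2*b.x1 + a.x3*b.x0 - a.x4*b.x7 + a.x5*b.x6 - a.x6*b.x5 - a.x7*b.x4,
   a.x0*b.x4 + a.x1*b.x5 - a.x2*b.x6 + a.x3*b.x7 + a.x4*b.x0 - a.x5*b.x1 + a.x6*b.x2 + a.x7*b.x3,
   a.x0*b.x5 + a.x1*b.x4 + a.x2*b.x7 - a.x3*b.x6 - a.x4*b.x1 + a.x5*b.x0 + a.x6*b.x3 + a.x7*b.x2,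
   a.x0*b.x6 + a.x1*b.x7 + a.x2*b.x4 - a.x3*b.x5 - a.x4*b.x2 + a.x5*b.x3 + a.x6*b.x0 + a.x7*b.x1,
   a.x0*b.x7 + a.x1*b.x6 - a.x2*b.x5 + a.x3*b.x4 + a.x4*b.x3 - a.x5*b.x2 + a.x6*b.x1 + a.x7*b.x0⟩⟩

/-- The Clifford conjugate `ā`. -/
def conj (a : Cl12) : Cl12 := ⟨a.x0, -a.x1, -a.x2, -a.x3, -a.x4, -a.x5, -a.x6, a.x7⟩

/-- The "prime" involution `a'`. -/
def prime (a : Cl12) : Cl12 := ⟨a.x0, a.x1, -a.x2, a.x3, -a.x4, a.x5, -a.x6, -a.x7⟩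

/-- `N(a) = a₀² - a₁² + a₂² - a₃² + a₄² - a₅² + a₆² - a₇²`. -/
def N (a : Cl12) : ℝ := a.x0^2 - a.x1^2 + a.x2^2 - a.x3^2 + a.x4^2 - a.x5^2 + a.x6^2 - a.x7^2

/-- `T(a) = a₀a₇ + a₂a₅ - a₁a₆ - a₃a₄`. -/
def T (a : Cl12) : ℝ := a.x0*a.x7 + a.x2*a.x5 - a.x1*a.x6 - a.x3*a.x4

/-- `P(a) = N(a)² + 4T(a)²`. -/
def P (a : Cl12) : ℝ := N a ^ 2 + 4 * T a ^ 2

/-- The basis element `e₇ = i₁i₂i₃`. -/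
def e7 : Cl12 := ⟨0,0,0,0,0,0,0,1⟩

/-- The real scalar `r` as an element of `Cℓ(1,2)`. -/
def ofReal (r : ℝ) : Cl12 := ⟨r,0,0,0,0,0,0,0⟩

/-- The "real part" `Cre(a) = a₀ + a₇e₇`. -/
def Cre (a : Cl12) : Cl12 := ⟨a.x0, 0, 0, 0, 0, 0, 0, a.x7⟩

end Cl12

namespace Cl12
lemma zero_def : (0 : Cl12) = ⟨0,0,0,0,0,0,0,0⟩ := rfl
lemma mul_def (a b : Cl12) : a * b =
  ⟨a.x0*b.x0 + a.x1*b.x1 - a.x2*b.x2 + a.x3*b.x3 - a.x4*b.x4 + a.x5*b.x5 - a.x6*b.x6 - a.x7*b.x7,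
   a.x0*b.x1 + a.x1*b.x0 + a.x2*b.x3 - a.x3*b.x2 + a.x4*b.x5 - a.x5*b.x4 - a.x6*b.x7 - a.x7*b.x6,
   a.x0*b.x2 + a.x1*b.x3 + a.x2*b.x0 - a.x3*b.x1 + a.x4*b.x6 - a.x5*b.x7 - a.x6*b.x4 - a.x7*b.x5,
   a.x0*b.x3 + a.x1*b.x2 - a.x2*b.x1 + a.x3*b.x0 - a.x4*b.x7 + a.x5*b.x6 - a.x6*b.x5 - a.x7*b.x4,
   a.x0*b.x4 + a.x1*b.x5 - a.x2*b.x6 + a.x3*b.x7 + a.x4*b.x0 - a.x5*b.x1 + a.x6*b.x2 + a.x7*b.x3,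
   a.x0*b.x5 + a.x1*b.x4 + a.x2*b.x7 - a.x3*b.x6 - a.x4*b.x1 + a.x5*b.x0 + a.x6*b.x3 + a.x7*b.x2,
   a.x0*b.x6 + a.x1*b.x7 + a.x2*b.x4 - a.x3*b.x5 - a.x4*b.x2 + a.x5*b.x3 + a.x6*b.x0 + a.x7*b.x1,
   a.x0*b.x7 + a.x1*b.x6 - a.x2*b.x5 + a.x3*b.x4 + a.x4*b.x3 - a.x5*b.x2 + a.x6*b.x1 + a.x7*b.x0⟩ := rfl
lemma smul_def (r : ℝ) (a : Cl12) :
    r • a = ⟨r*a.x0, r*a.x1, r*a.x2, r*a.x3, r*a.x4, r*a.x5, r*a.x6, r*a.x7⟩ := rfl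
end Cl12

set_option maxHeartbeats 1000000 in
/-- For nonzero `a ∈ Cℓ(1,2)` with `P(a) = 0` and `K = a₀² + a₂² + a₄² + a₆²`,
the element `x = a'/(4K)` satisfies the Moore–Penrose equations. -/
theorem mp_formula (a : Cl12) (ha : a ≠ 0) (hP : Cl12.P a = 0) (x : Cl12)
    (hx : x = (4 * (a.x0^2 + a.x2^2 + a.x4^2 + a.x6^2))⁻¹ • Cl12.prime a) :
    a * x * a = a ∧ x * a * x = x ∧
    Cl12.prime (a * x) = a * x ∧ Cl12.prime (x * a) = x * a := by
  simp only [Cl12.P, Cl12.N, Cl12.T] at hP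
  have hN : a.x0^2 - a.x1^2 + a.x2^2 - a.x3^2 + a.x4^2 - a.x5^2 + a.x6^2 - a.x7^2 = 0 := by
    have h1 : (a.x0^2 - a.x1^2 + a.x2^2 - a.x3^2 + a.x4^2 - a.x5^2 + a.x6^2 - a.x7^2)^2 = 0 := by
      nlinarith [sq_nonneg (a.x0*a.x7 + a.x2*a.x5 - a.x1*a.x6 - a.x3*a.x4)]
    exact pow_eq_zero_iff two_ne_zero |>.mp h1
  have hT : a.x0*a.x7 + a.x2*a.x5 - a.x1*a.x6 - a.x3*a.x4 = 0 := by
    have h1 : (a.x0*a.x7 + a.x2*a.x5 - a.x1*a.x6 - a.x3*a.x4)^2 = 0 := by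
      nlinarith [sq_nonneg (a.x0^2 - a.x1^2 + a.x2^2 - a.x3^2 + a.x4^2 - a.x5^2 + a.x6^2 - a.x7^2)]
    exact pow_eq_zero_iff two_ne_zero |>.mp h1
  have hK : 4 * (a.x0^2 + a.x2^2 + a.x4^2 + a.x6^2) ≠ 0 := by
    intro h
    apply ha
    have q0 := sq_nonneg a.x0
    have q1 := sq_nonneg a.x1
    have q2 := sq_nonneg a.x2
    have q3 := sq_nonneg a.x3
    have q4 := sq_nonneg a.x4
    have q5 := sq_nonneg a.x5
    have q6 := sq_nonneg a.x6
    have q7 := sq_nonneg a.x7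
    have h0 : a.x0 = 0 := pow_eq_zero_iff two_ne_zero |>.mp (by linarith)
    have h2 : a.x2 = 0 := pow_eq_zero_iff two_ne_zero |>.mp (by linarith)
    have h4 : a.x4 = 0 := pow_eq_zero_iff two_ne_zero |>.mp (by linarith)
    have h6 : a.x6 = 0 := pow_eq_zero_iff two_ne_zero |>.mp (by linarith)
    have h1 : a.x1 = 0 := pow_eq_zero_iff two_ne_zero |>.mp (by linarith)
    have h3 : a.x3 = 0 := pow_eq_zero_iff two_ne_zero |>.mp (by linarith)
    have h5 : a.x5 = 0 := pow_eq_zero_iff two_ne_zero |>.mp (by linarith)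
    have h7 : a.x7 = 0 := pow_eq_zero_iff two_ne_zero |>.mp (by linarith)
    ext <;> simp [Cl12.zero_def, h0, h1, h2, h3, h4, h5, h6, h7]
  have hms : ∀ (r : ℝ) (u v : Cl12), (r • u) * v = r • (u * v) := by
    intro r u v; ext <;> simp only [Cl12.mul_def, Cl12.smul_def] <;> ring
  have hsm : ∀ (r : ℝ) (u v : Cl12), u * (r • v) = r • (u * v) := by
    intro r u v; ext <;> simp only [Cl12.mul_def, Cl12.smul_def] <;> ring
  have hss : ∀ (r s : ℝ) (u : Cl12), r • (s • u) = (r * s) • u := by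
    intro r s u; ext <;> simp only [Cl12.smul_def] <;> ring
  have hone : ∀ (u : Cl12), (1 : ℝ) • u = u := by
    intro u; ext <;> simp only [Cl12.smul_def] <;> ring
  have key1 : a * Cl12.prime a * a = (4 * (a.x0^2 + a.x2^2 + a.x4^2 + a.x6^2)) • a := by
    ext <;> simp only [Cl12.mul_def, Cl12.smul_def, Cl12.prime]
    · linear_combination (-3*a.x0) * hN + (-2*a.x7) * hT
    · linear_combination (-a.x1) * hN + (2*a.x6) * hT
    · linear_combination (-3*a.x2) * hN + (-2*a.x5) * hT
    · linear_combination (-a.x3) * hN + (2*a.x4) * hT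
    · linear_combination (-3*a.x4) * hN + (2*a.x3) * hT
    · linear_combination (-a.x5) * hN + (-2*a.x2) * hT
    · linear_combination (-3*a.x6) * hN + (2*a.x1) * hT
    · linear_combination (-a.x7) * hN + (-2*a.x0) * hT
  have key2 : Cl12.prime a * a * Cl12.prime a
      = (4 * (a.x0^2 + a.x2^2 + a.x4^2 + a.x6^2)) • Cl12.prime a := by
    ext <;> simp only [Cl12.mul_def, Cl12.smul_def, Cl12.prime]
    · linear_combination (-3*a.x0) * hN + (-2*a.x7) * hT
    · linear_combination (-a.x1) * hN + (2*a.x6) * hT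
    · linear_combination (3*a.x2) * hN + (2*a.x5) * hT
    · linear_combination (-a.x3) * hN + (2*a.x4) * hT
    · linear_combination (3*a.x4) * hN + (-2*a.x3) * hT
    · linear_combination (-a.x5) * hN + (-2*a.x2) * hT
    · linear_combination (3*a.x6) * hN + (-2*a.x1) * hT
    · linear_combination (a.x7) * hN + (2*a.x0) * hT
  subst hx
  set K := 4 * (a.x0^2 + a.x2^2 + a.x4^2 + a.x6^2) with hKdef
  refine ⟨?_, ?_, ?_, ?_⟩
  · rw [hsm, hms, key1, hss, inv_mul_cancel₀ hK, hone]
  · rw [hms, hsm, hms, hss, key2, hss]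
    rw [show K⁻¹ * K⁻¹ * K = K⁻¹ by field_simp]
  · ext <;> simp only [Cl12.mul_def, Cl12.smul_def, Cl12.prime] <;> ring
  · ext <;> simp only [Cl12.mul_def, Cl12.smul_def, Cl12.prime] <;> ring
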